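/- Let N ≥ 3, b > 0, and let f ∈ C¹(ℝ₊^N) satisfy f(y) ≥ (λ/|y − x|)^b · f(x + λ²(y − x)/|y − x|²) for all y ∈ ℝ₊^N, all x ∈ ∂ℝ₊^N, and all λ > 0. Then f depends only on the last coordinate: f(y) = f(y_N e_N) for all y ∈ ℝ₊^N. -/

import Mathlib

open Real Filter
open scoped BigOperators RealInnerProductSpace

noncomputable section

/-- `N`-dimensional Euclidean space. -/
abbrev E (N : ℕ) := EuclideanSpace ℝ (Fin N)

/-- The last coordinate index of `Fin N`. -/
def lastIdx (N : ℕ) (h : 0 < N) : Fin N := ⟨N - 1, Nat.sub_lt h Nat.one_pos⟩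

/-- Partial derivative of `u` in the `i`-th coordinate direction. -/
def pd {N : ℕ} (u : E N → ℝ) (i : Fin N) (y : E N) : ℝ :=
  fderiv ℝ u y (EuclideanSpace.single i 1)

/-- The Laplacian of `u`. -/
def lap {N : ℕ} (u : E N → ℝ) (y : E N) : ℝ := ∑ i, pd (pd u i) i y

/-!
For fixed `x` on the boundary and `y` in the half-space, the hypothesis says that
`λ ↦ (λ/|y-x|)^b f(x + λ²(y-x)/|y-x|²)` attains its maximum `f y` at `λ = |y-x|`, where the
inversion fixes `y`. The first-order condition reads `b f(y) + 2 ∇f(y)·(y - x) = 0`. Comparing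
two boundary points `x` kills the `f(y)` term, so every horizontal derivative of `f` vanishes,
and `f` is constant along each horizontal line.
-/

section

variable {V W : Type*} [NormedAddCommGroup V] [NormedSpace ℝ V]
  [NormedAddCommGroup W] [NormedSpace ℝ W]

theorem hasDerivAt_rpow_mul_comp_add_sq_smul {f : V → ℝ} {F : V →L[ℝ] ℝ} {x v : V}
    (hf : HasFDerivAt f F (x + v)) (b : ℝ) :
    HasDerivAt (fun t : ℝ => t ^ b * f (x + (t ^ 2) • v)) (b * f (x + v) + 2 * F v) 1 := by
  have hpow : HasDerivAt (fun t : ℝ => t ^ b) b 1 := by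
    simpa using (hasDerivAt_id (1 : ℝ)).rpow_const (p := b) (Or.inl one_ne_zero)
  have hcurve : HasDerivAt (fun t : ℝ => x + (t ^ 2) • v) ((2 : ℝ) • v) 1 := by
    simpa using ((hasDerivAt_pow 2 (1 : ℝ)).smul_const v).const_add x
  have hf' : HasFDerivAt f F (x + ((1 : ℝ) ^ 2) • v) := by simpa using hf
  have h : HasDerivAt (fun t : ℝ => t ^ b * f (x + (t ^ 2) • v))
      (b * f (x + ((1 : ℝ) ^ 2) • v) + 1 ^ b * F ((2 : ℝ) • v)) 1 :=
    hpow.mul (hf'.comp_hasDerivAt 1 hcurve)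
  convert h using 1
  simp only [one_pow, one_smul, one_rpow, one_mul, map_smul, smul_eq_mul]

theorem mul_add_two_mul_fderiv_eq_zero_of_kelvin_le {f : V → ℝ} {F : V →L[ℝ] ℝ} {x z : V}
    (b : ℝ) (hf : HasFDerivAt f F z) (hzx : z ≠ x)
    (hle : ∀ lam : ℝ, 0 < lam →
      (lam / ‖z - x‖) ^ b * f (x + (lam ^ 2 / ‖z - x‖ ^ 2) • (z - x)) ≤ f z) :
    b * f z + 2 * F (z - x) = 0 := by
  have hr : 0 < ‖z - x‖ := norm_pos_iff.mpr (sub_ne_zero.mpr hzx)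
  have hderiv := hasDerivAt_rpow_mul_comp_add_sq_smul (x := x) (v := z - x)
    (by rwa [add_sub_cancel]) b
  rw [add_sub_cancel] at hderiv
  refine hderiv.deriv ▸ IsLocalMax.deriv_eq_zero ?_
  -- substitute `lam = t * ‖z - x‖`
  filter_upwards [eventually_gt_nhds one_pos] with t ht
  have h := hle (t * ‖z - x‖) (by positivity)
  rw [mul_div_cancel_right₀ _ hr.ne', mul_pow, mul_div_cancel_right₀ _ (by positivity)] at h
  simpa [add_sub_cancel] using h

theorem ContinuousLinearMap.map_eq_zero_of_map_sub_eq_const (F : V →L[ℝ] ℝ) {S : Submodule ℝ V} {z : V}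
    {c : ℝ} (h : ∀ x ∈ S, F (z - x) = c) {v : V} (hv : v ∈ S) : F v = 0 := by
  have h0 := h 0 S.zero_mem
  have hneg := h (-v) (S.neg_mem hv)
  rw [sub_neg_eq_add, map_add] at hneg
  rw [sub_zero] at h0
  linarith

theorem apply_add_eq_of_fderiv_apply_eq_zero {f : V → W} {y v : V} (hf : ∀ t : ℝ, DifferentiableAt ℝ f (y + t • v))
    (hv : ∀ t : ℝ, fderiv ℝ f (y + t • v) v = 0) : f (y + v) = f y := by
  have hline : ∀ t : ℝ, HasDerivAt (fun s : ℝ => f (y + s • v)) 0 t := fun t => by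
    have h := (hf t).hasFDerivAt.comp_hasDerivAt t (((hasDerivAt_id t).smul_const v).const_add y)
    rwa [one_smul, hv t] at h
  simpa using is_const_of_deriv_eq_zero (fun t => (hline t).differentiableAt)
    (fun t => (hline t).deriv) 1 0

end

/-- if `f ∈ C¹(ℝ₊^N)` satisfies
`f(y) ≥ (λ/|y-x|)^b f(x + λ²(y-x)/|y-x|²)` for all `y ∈ ℝ₊^N`, `x ∈ ∂ℝ₊^N`, `λ > 0`,
then `f` depends only on the last coordinate. -/
theorem stmt6 (N : ℕ) (hN : 3 ≤ N) (b : ℝ) (f : E N → ℝ)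
    (hf : ContDiffOn ℝ 1 f {y : E N | 0 < y (lastIdx N (by omega))})
    (hinv : ∀ y : E N, 0 < y (lastIdx N (by omega)) →
      ∀ x : E N, x (lastIdx N (by omega)) = 0 → ∀ lam : ℝ, 0 < lam →
      (lam / ‖y - x‖) ^ b * f (x + (lam ^ 2 / ‖y - x‖ ^ 2) • (y - x)) ≤ f y) :
    ∀ y : E N, 0 < y (lastIdx N (by omega)) →
      f y = f ((y (lastIdx N (by omega))) •
        (EuclideanSpace.single (lastIdx N (by omega)) (1 : ℝ) : E N)) := by
  set l := lastIdx N (by omega)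
  set boundary : Submodule ℝ (E N) :=
    LinearMap.ker ((EuclideanSpace.proj l : E N →L[ℝ] ℝ) : E N →ₗ[ℝ] ℝ)
  have hdiff : ∀ z : E N, 0 < z l → DifferentiableAt ℝ f z := fun z hz =>
    (hf.differentiableOn one_ne_zero).differentiableAt
      ((isOpen_lt continuous_const (EuclideanSpace.proj l).continuous).mem_nhds hz)
  have hfirst : ∀ z : E N, 0 < z l → ∀ x ∈ boundary,
      fderiv ℝ f z (z - x) = -(b * f z) / 2 := fun z hz x hx => by
    have hx : x l = 0 := hx
    have hzx : z ≠ x := fun h => by simp [h, hx] at hz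
    linarith [mul_add_two_mul_fderiv_eq_zero_of_kelvin_le b (hdiff z hz).hasFDerivAt hzx
      (hinv z hz x hx)]
  intro y hy
  set v : E N := y l • EuclideanSpace.single l 1 - y
  have hv : v ∈ boundary := by simp [boundary, v]
  have hline : ∀ t : ℝ, 0 < (y + t • v) l := fun t => by simpa [show v l = 0 from hv] using hy
  have hconst := apply_add_eq_of_fderiv_apply_eq_zero (fun t => hdiff _ (hline t))
    (fun t => (fderiv ℝ f _).map_eq_zero_of_map_sub_eq_const (hfirst _ (hline t)) hv)
  rw [add_sub_cancel] at hconst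
  exact hconst.symm
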